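/- (Theorem 1, possibilistic indefinite causal order.) Let q be a possibility distribution over the fifteen binary variables (a1,a2,a3,b1,b2,b3,c1,c2,c3,x1,x2,y1,y2,z1,z2), writing x⃗=(x1,x2), y⃗=(y1,y2), z⃗=(z1,z2), 𝟎=(0,0), 𝟏=(1,1). Suppose q satisfies: (i) all inputs possible: q(x⃗,y⃗,z⃗)=1 for all values of x⃗,y⃗,z⃗; (ii) the implications q(a1⊕b1⊕c1=1, x⃗=𝟏,y⃗=𝟏,z⃗=𝟏)=0, q(a1⊕b3⊕c3=0, x⃗=𝟏,y⃗=𝟎,z⃗=𝟎)=0, q(a3⊕b1⊕c3=0, x⃗=𝟎,y⃗=𝟏,z⃗=𝟎)=0, q(a3⊕b3⊕c1=0, x⃗=𝟎,y⃗=𝟎,z⃗=𝟏)=0, where ⊕ is addition mod 2; (iii) q(a1=1,x2=0)=0, q(a2=1,x1=0)=0, q(a1=0,a2=0,x1=1,x2=1)=0, and the analogous three conditions with (b1,b2,y1,y2) and with (c1,c2,z1,z2). Then there is no possibility distribution q(a⃗,b⃗,c⃗,x⃗,y⃗,z⃗,λ_A,λ_B,λ_C) with λ_A,λ_B,λ_C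 ∈ {0,1} whose marginal over (λ_A,λ_B,λ_C) equals q, such that the marginal q(a1,a2,x1,x2,λ_A) is a hidden causal order model for q(a1,a2,x1,x2), q(b1,b2,y1,y2,λ_B) for q(b1,b2,y1,y2), q(c1,c2,z1,z2,λ_C) for q(c1,c2,z1,z2), and which additionally satisfies the relativistic causality conditions (λ_A,λ_B,λ_C) ⫫_q (x⃗,y⃗,z⃗), (λ_A,b3,c3) ⫫_q x⃗ | (y⃗,z⃗), (a3,λ_B,c3) ⫫_q y⃗ | (x⃗,z⃗), and (a3,b3,λ_C) ⫫_q z⃗ | (x⃗,y⃗). -/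
import Mathlib


set_option synthInstance.maxSize 100000
set_option maxHeartbeats 1000000

/-!
Possibilistic setting: the Boolean semiring `𝔹 = {0,1}` is modelled by `Bool`
(`+` is `||`, `·` is `&&`); Boolean sums over finite types are `decide ∃`.
-/

/-- Boolean (possibilistic) sum over a finite type. -/
def pSum {α : Type} [Fintype α] (f : α → Bool) : Bool :=
  decide (∃ x, f x = true)

/-- The nine binary outcome variables. -/
structure Outcome where
  a1 : Bool
  a2 : Bool
  a3 : Bool
  b1 : Bool
  b2 : Bool
  b3 : Bool
  c1 : Bool
  c2 : Bool
  c3 : Bool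
deriving DecidableEq, Fintype

/-- The six binary input variables `x⃗ = (x1,x2)`, `y⃗ = (y1,y2)`, `z⃗ = (z1,z2)`. -/
structure Inputs where
  x1 : Bool
  x2 : Bool
  y1 : Bool
  y2 : Bool
  z1 : Bool
  z2 : Bool
deriving DecidableEq, Fintype

/-- The three binary hidden causal order variables `λ_A, λ_B, λ_C`. -/
structure Lams where
  lA : Bool
  lB : Bool
  lC : Bool
deriving DecidableEq, Fintype

/-- Boolean marginal of `q(a⃗,b⃗,c⃗,x⃗,y⃗,z⃗)` over the fibre of the event `E`. -/
def M2 (q : Outcome → Inputs → Bool) (E : Outcome → Inputs → Prop)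
    [∀ o i, Decidable (E o i)] : Bool :=
  decide (∃ o i, q o i = true ∧ E o i)

/-- Boolean marginal of `q(a⃗,b⃗,c⃗,x⃗,y⃗,z⃗,λ_A,λ_B,λ_C)` over the fibre of the event `E`. -/
def M3 (q18 : Outcome → Inputs → Lams → Bool) (E : Outcome → Inputs → Lams → Prop)
    [∀ o i l, Decidable (E o i l)] : Bool :=
  decide (∃ o i l, q18 o i l = true ∧ E o i l)

/-- `r5 (a1, a2, x1, x2, λ)` is a *hidden causal order model* for the possibility
distribution `r (a1, a2, x1, x2)`:  `r5` is a possibility distribution whose marginal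
over `λ` is `r`, satisfying `λ ⫫ (x1,x2)`, `a1 ⫫ x2 | λ = 0` and `a2 ⫫ x1 | λ = 1`. -/
structure IsHCOModel (r : Bool → Bool → Bool → Bool → Bool)
    (r5 : Bool → Bool → Bool → Bool → Bool → Bool) : Prop where
  normalized : ∃ a1 a2 x1 x2 l, r5 a1 a2 x1 x2 l = true
  marg : ∀ a1 a2 x1 x2, pSum (fun l => r5 a1 a2 x1 x2 l) = r a1 a2 x1 x2
  indep_lam_inputs : ∀ l x1 x2,
    (pSum fun a1 => pSum fun a2 => r5 a1 a2 x1 x2 l)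
      = ((pSum fun a1 => pSum fun a2 => pSum fun x1' => pSum fun x2' => r5 a1 a2 x1' x2' l)
        && (pSum fun a1 => pSum fun a2 => pSum fun l' => r5 a1 a2 x1 x2 l'))
  indep_a1_x2 : ∀ a1 x2,
    (pSum fun a2 => pSum fun x1 => r5 a1 a2 x1 x2 false)
      = ((pSum fun a2 => pSum fun x1 => pSum fun x2' => r5 a1 a2 x1 x2' false)
        && (pSum fun a1' => pSum fun a2 => pSum fun x1 => r5 a1' a2 x1 x2 false))
  indep_a2_x1 : ∀ a2 x1,
    (pSum fun a1 => pSum fun x2 => r5 a1 a2 x1 x2 true)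
      = ((pSum fun a1 => pSum fun x1' => pSum fun x2 => r5 a1 a2 x1' x2 true)
        && (pSum fun a1' => pSum fun a2' => pSum fun x2 => r5 a1' a2' x1 x2 true))

/-- The marginal possibility distribution `q(a1, a2, x1, x2)`. -/
def margA (q : Outcome → Inputs → Bool) : Bool → Bool → Bool → Bool → Bool :=
  fun a1 a2 x1 x2 => M2 q fun o i => o.a1 = a1 ∧ o.a2 = a2 ∧ i.x1 = x1 ∧ i.x2 = x2

/-- The marginal possibility distribution `q(b1, b2, y1, y2)`. -/
def margB (q : Outcome → Inputs → Bool) : Bool → Bool → Bool → Bool → Bool :=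
  fun b1 b2 y1 y2 => M2 q fun o i => o.b1 = b1 ∧ o.b2 = b2 ∧ i.y1 = y1 ∧ i.y2 = y2

/-- The marginal possibility distribution `q(c1, c2, z1, z2)`. -/
def margC (q : Outcome → Inputs → Bool) : Bool → Bool → Bool → Bool → Bool :=
  fun c1 c2 z1 z2 => M2 q fun o i => o.c1 = c1 ∧ o.c2 = c2 ∧ i.z1 = z1 ∧ i.z2 = z2

/-- The marginal possibility distribution `q(a1, a2, x1, x2, λ_A)`. -/
def margA5 (q18 : Outcome → Inputs → Lams → Bool) :
    Bool → Bool → Bool → Bool → Bool → Bool :=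
  fun a1 a2 x1 x2 l =>
    M3 q18 fun o i ls => o.a1 = a1 ∧ o.a2 = a2 ∧ i.x1 = x1 ∧ i.x2 = x2 ∧ ls.lA = l

/-- The marginal possibility distribution `q(b1, b2, y1, y2, λ_B)`. -/
def margB5 (q18 : Outcome → Inputs → Lams → Bool) :
    Bool → Bool → Bool → Bool → Bool → Bool :=
  fun b1 b2 y1 y2 l =>
    M3 q18 fun o i ls => o.b1 = b1 ∧ o.b2 = b2 ∧ i.y1 = y1 ∧ i.y2 = y2 ∧ ls.lB = l

/-- The marginal possibility distribution `q(c1, c2, z1, z2, λ_C)`. -/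
def margC5 (q18 : Outcome → Inputs → Lams → Bool) :
    Bool → Bool → Bool → Bool → Bool → Bool :=
  fun c1 c2 z1 z2 l =>
    M3 q18 fun o i ls => o.c1 = c1 ∧ o.c2 = c2 ∧ i.z1 = z1 ∧ i.z2 = z2 ∧ ls.lC = l


lemma pSum_true {α : Type} [Fintype α] {f : α → Bool} :
    pSum f = true ↔ ∃ x, f x = true := by simp [pSum]

lemma hco_key (r : Bool → Bool → Bool → Bool → Bool)
    (r5 : Bool → Bool → Bool → Bool → Bool → Bool)
    (h : IsHCOModel r r5)
    (h1 : ∀ a2 x1, r true a2 x1 false = false)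
    (h2 : ∀ a1 x2, r a1 true false x2 = false)
    (h3 : r false false true true = false)
    (hx : ∀ x1 x2, ∃ a1 a2, r a1 a2 x1 x2 = true) :
    ∀ a1 a2 l, r5 a1 a2 true true l = true → a1 = l := by
  intro a1 a2 l hpt
  -- every (x1,x2) is possible jointly with λ = l
  have hall : ∀ x1 x2, ∃ a1' a2', r5 a1' a2' x1 x2 l = true := by
    intro x1 x2
    have hL : (pSum fun a1 => pSum fun a2 => pSum fun x1' => pSum fun x2' =>
        r5 a1 a2 x1' x2' l) = true := by
      simp only [pSum_true]; exact ⟨a1, a2, true, true, hpt⟩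
    have hX : (pSum fun a1 => pSum fun a2 => pSum fun l' => r5 a1 a2 x1 x2 l') = true := by
      obtain ⟨a1', a2', hr⟩ := hx x1 x2
      simp only [pSum_true]
      refine ⟨a1', a2', ?_⟩
      rw [← pSum_true]
      rw [h.marg]; exact hr
    have := h.indep_lam_inputs l x1 x2
    rw [hL, hX] at this
    simp only [Bool.and_self, pSum_true] at this
    obtain ⟨a1', a2', hh⟩ := this
    exact ⟨a1', a2', hh⟩
  have tomarg : ∀ a1' a2' x1 x2, r5 a1' a2' x1 x2 l = true → r a1' a2' x1 x2 = true := by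
    intro a1' a2' x1 x2 hh
    rw [← h.marg]; rw [pSum_true]; exact ⟨l, hh⟩
  cases l with
  | false =>
    cases a1 with
    | false => rfl
    | true =>
      exfalso
      have hA1 : (pSum fun a2 => pSum fun x1 => pSum fun x2' =>
          r5 true a2 x1 x2' false) = true := by
        simp only [pSum_true]; exact ⟨a2, true, true, hpt⟩
      obtain ⟨a1', a2', hw⟩ := hall true false
      have hX2 : (pSum fun a1' => pSum fun a2 => pSum fun x1 =>
          r5 a1' a2 x1 false false) = true := by
        simp only [pSum_true]; exact ⟨a1', a2', true, hw⟩
      have := h.indep_a1_x2 true false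
      rw [hA1, hX2] at this
      simp only [Bool.and_self, pSum_true] at this
      obtain ⟨a2'', x1'', hh⟩ := this
      have := tomarg _ _ _ _ hh
      rw [h1 a2'' x1''] at this
      exact Bool.false_ne_true this
  | true =>
    have ha2 : a2 = false := by
      cases a2 with
      | false => rfl
      | true =>
        exfalso
        have hA2 : (pSum fun a1 => pSum fun x1' => pSum fun x2 =>
            r5 a1 true x1' x2 true) = true := by
          simp only [pSum_true]; exact ⟨a1, true, true, hpt⟩
        obtain ⟨a1', a2', hw⟩ := hall false true
        have hX1 : (pSum fun a1' => pSum fun a2' => pSum fun x2 =>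
            r5 a1' a2' false x2 true) = true := by
          simp only [pSum_true]; exact ⟨a1', a2', true, hw⟩
        have := h.indep_a2_x1 true false
        rw [hA2, hX1] at this
        simp only [Bool.and_self, pSum_true] at this
        obtain ⟨a1'', x2'', hh⟩ := this
        have := tomarg _ _ _ _ hh
        rw [h2 a1'' x2''] at this
        exact Bool.false_ne_true this
    subst ha2
    cases a1 with
    | true => rfl
    | false =>
      exfalso
      have := tomarg _ _ _ _ hpt
      rw [h3] at this
      exact Bool.false_ne_true this

/-- **Theorem 1: possibilistic indefinite causal order.** -/
theorem stmt4 (q : Outcome → Inputs → Bool)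
    -- `q` is a possibility distribution
    (hq : ∃ o i, q o i = true)
    -- (i) all inputs are possible
    (hin : ∀ iv : Inputs, M2 q (fun _ i => i = iv) = true)
    -- (ii) the GHZ-type perfect correlations
    (hg1 : M2 q (fun o i => Bool.xor o.a1 (Bool.xor o.b1 o.c1) = true ∧
        i = ⟨true, true, true, true, true, true⟩) = false)
    (hg2 : M2 q (fun o i => Bool.xor o.a1 (Bool.xor o.b3 o.c3) = false ∧
        i = ⟨true, true, false, false, false, false⟩) = false)
    (hg3 : M2 q (fun o i => Bool.xor o.a3 (Bool.xor o.b1 o.c3) = false ∧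
        i = ⟨false, false, true, true, false, false⟩) = false)
    (hg4 : M2 q (fun o i => Bool.xor o.a3 (Bool.xor o.b3 o.c1) = false ∧
        i = ⟨false, false, false, false, true, true⟩) = false)
    -- (iii) the conditions of Lemma 1, for each of the three switches
    (ha1 : M2 q (fun o i => o.a1 = true ∧ i.x2 = false) = false)
    (ha2 : M2 q (fun o i => o.a2 = true ∧ i.x1 = false) = false)
    (ha3 : M2 q (fun o i => o.a1 = false ∧ o.a2 = false ∧ i.x1 = true ∧ i.x2 = true) = false)
    (hb1 : M2 q (fun o i => o.b1 = true ∧ i.y2 = false) = false)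
    (hb2 : M2 q (fun o i => o.b2 = true ∧ i.y1 = false) = false)
    (hb3 : M2 q (fun o i => o.b1 = false ∧ o.b2 = false ∧ i.y1 = true ∧ i.y2 = true) = false)
    (hc1 : M2 q (fun o i => o.c1 = true ∧ i.z2 = false) = false)
    (hc2 : M2 q (fun o i => o.c2 = true ∧ i.z1 = false) = false)
    (hc3 : M2 q (fun o i => o.c1 = false ∧ o.c2 = false ∧ i.z1 = true ∧ i.z2 = true) = false) :
    -- conclusion: no hidden-variable possibility distribution exists
    ¬ ∃ q18 : Outcome → Inputs → Lams → Bool,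
        -- `q18` is a possibility distribution
        (∃ o i l, q18 o i l = true) ∧
        -- its marginal over `(λ_A, λ_B, λ_C)` is `q`
        (∀ o i, pSum (fun l : Lams => q18 o i l) = q o i) ∧
        -- definite causal order: each switch marginal carries a hidden causal order model
        IsHCOModel (margA q) (margA5 q18) ∧
        IsHCOModel (margB q) (margB5 q18) ∧
        IsHCOModel (margC q) (margC5 q18) ∧
        -- relativistic causality: `(λ_A,λ_B,λ_C) ⫫ (x⃗,y⃗,z⃗)`
        (∀ (lv : Lams) (iv : Inputs),
          M3 q18 (fun _ i l => l = lv ∧ i = iv)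
            = (M3 q18 (fun _ _ l => l = lv) && M3 q18 (fun _ i _ => i = iv))) ∧
        -- `(λ_A, b3, c3) ⫫ x⃗ | (y⃗, z⃗)`
        (∀ lA b3 c3 x1 x2 y1 y2 z1 z2 : Bool,
          M3 q18 (fun o i l => l.lA = lA ∧ o.b3 = b3 ∧ o.c3 = c3 ∧
              i.x1 = x1 ∧ i.x2 = x2 ∧ i.y1 = y1 ∧ i.y2 = y2 ∧ i.z1 = z1 ∧ i.z2 = z2)
            = (M3 q18 (fun o i l => l.lA = lA ∧ o.b3 = b3 ∧ o.c3 = c3 ∧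
                i.y1 = y1 ∧ i.y2 = y2 ∧ i.z1 = z1 ∧ i.z2 = z2)
              && M3 q18 (fun _ i _ => i.x1 = x1 ∧ i.x2 = x2 ∧
                i.y1 = y1 ∧ i.y2 = y2 ∧ i.z1 = z1 ∧ i.z2 = z2))) ∧
        -- `(a3, λ_B, c3) ⫫ y⃗ | (x⃗, z⃗)`
        (∀ a3 lB c3 x1 x2 y1 y2 z1 z2 : Bool,
          M3 q18 (fun o i l => o.a3 = a3 ∧ l.lB = lB ∧ o.c3 = c3 ∧
              i.x1 = x1 ∧ i.x2 = x2 ∧ i.y1 = y1 ∧ i.y2 = y2 ∧ i.z1 = z1 ∧ i.z2 = z2)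
            = (M3 q18 (fun o i l => o.a3 = a3 ∧ l.lB = lB ∧ o.c3 = c3 ∧
                i.x1 = x1 ∧ i.x2 = x2 ∧ i.z1 = z1 ∧ i.z2 = z2)
              && M3 q18 (fun _ i _ => i.x1 = x1 ∧ i.x2 = x2 ∧
                i.y1 = y1 ∧ i.y2 = y2 ∧ i.z1 = z1 ∧ i.z2 = z2))) ∧
        -- `(a3, b3, λ_C) ⫫ z⃗ | (x⃗, y⃗)`
        (∀ a3 b3 lC x1 x2 y1 y2 z1 z2 : Bool,
          M3 q18 (fun o i l => o.a3 = a3 ∧ o.b3 = b3 ∧ l.lC = lC ∧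
              i.x1 = x1 ∧ i.x2 = x2 ∧ i.y1 = y1 ∧ i.y2 = y2 ∧ i.z1 = z1 ∧ i.z2 = z2)
            = (M3 q18 (fun o i l => o.a3 = a3 ∧ o.b3 = b3 ∧ l.lC = lC ∧
                i.x1 = x1 ∧ i.x2 = x2 ∧ i.y1 = y1 ∧ i.y2 = y2)
              && M3 q18 (fun _ i _ => i.x1 = x1 ∧ i.x2 = x2 ∧
                i.y1 = y1 ∧ i.y2 = y2 ∧ i.z1 = z1 ∧ i.z2 = z2))) := by
  rintro ⟨q18, ⟨o0, i0, l0, h0⟩, hmarg, hA, hB, hC, hLI, hRA, hRB, hRC⟩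
  -- basic translations
  have M3_true : ∀ (E : Outcome → Inputs → Lams → Prop) [∀ o i l, Decidable (E o i l)],
      M3 q18 E = true ↔ ∃ o i l, q18 o i l = true ∧ E o i l := by
    intro E _; simp [M3]
  have hin' : ∀ iv : Inputs, ∃ o, q o iv = true := by
    intro iv
    have := hin iv
    simp only [M2, decide_eq_true_eq] at this
    obtain ⟨o, i, hq', hi⟩ := this
    exact ⟨o, hi ▸ hq'⟩
  have toq : ∀ o i l, q18 o i l = true → q o i = true := by
    intro o i l hpt
    rw [← hmarg o i, pSum_true]; exact ⟨l, hpt⟩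
  have hin18 : ∀ iv : Inputs, ∃ o l, q18 o iv l = true := by
    intro iv
    obtain ⟨o, ho⟩ := hin' iv
    have := (hmarg o iv).trans ho
    rw [pSum_true] at this
    obtain ⟨l, hl⟩ := this
    exact ⟨o, l, hl⟩
  -- false M2 hypotheses, pointwise
  have mkF : ∀ (E : Outcome → Inputs → Prop) [∀ o i, Decidable (E o i)],
      M2 q E = false → ∀ o i, q o i = true → E o i → False := by
    intro E _ hF o i hq' hE
    have : M2 q E = true := by
      simp only [M2, decide_eq_true_eq]; exact ⟨o, i, hq', hE⟩
    rw [hF] at this; exact Bool.false_ne_true this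
  -- Lemma 1 instantiation for switch A
  have keyA : ∀ o i ls, q18 o i ls = true → i.x1 = true → i.x2 = true →
      o.a1 = ls.lA := by
    have h1A : ∀ a2 x1, margA q true a2 x1 false = false := by
      intro a2 x1
      rw [Bool.eq_false_iff]
      intro hT
      simp only [margA, M2, decide_eq_true_eq] at hT
      obtain ⟨o, i, hq', e1, e2, e3, e4⟩ := hT
      exact mkF _ ha1 o i hq' ⟨e1, e4⟩
    have h2A : ∀ a1 x2, margA q a1 true false x2 = false := by
      intro a1 x2
      rw [Bool.eq_false_iff]
      intro hT
      simp only [margA, M2, decide_eq_true_eq] at hT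
      obtain ⟨o, i, hq', e1, e2, e3, e4⟩ := hT
      exact mkF _ ha2 o i hq' ⟨e2, e3⟩
    have h3A : margA q false false true true = false := by
      rw [Bool.eq_false_iff]
      intro hT
      simp only [margA, M2, decide_eq_true_eq] at hT
      obtain ⟨o, i, hq', e1, e2, e3, e4⟩ := hT
      exact mkF _ ha3 o i hq' ⟨e1, e2, e3, e4⟩
    have hxA : ∀ x1 x2, ∃ a1 a2, margA q a1 a2 x1 x2 = true := by
      intro x1 x2
      obtain ⟨o, ho⟩ := hin' ⟨x1, x2, false, false, false, false⟩
      exact ⟨o.a1, o.a2, by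
        simp only [margA, M2, decide_eq_true_eq]
        exact ⟨o, _, ho, rfl, rfl, rfl, rfl⟩⟩
    intro o i ls hpt hx1 hx2
    refine hco_key (margA q) (margA5 q18) hA h1A h2A h3A hxA o.a1 o.a2 ls.lA ?_
    simp only [margA5, M3, decide_eq_true_eq]
    exact ⟨o, i, ls, hpt, rfl, rfl, hx1, hx2, rfl⟩
  -- Lemma 1 instantiation for switch B
  have keyB : ∀ o i ls, q18 o i ls = true → i.y1 = true → i.y2 = true →
      o.b1 = ls.lB := by
    have h1B : ∀ a2 x1, margB q true a2 x1 false = false := by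
      intro a2 x1
      rw [Bool.eq_false_iff]
      intro hT
      simp only [margB, M2, decide_eq_true_eq] at hT
      obtain ⟨o, i, hq', e1, e2, e3, e4⟩ := hT
      exact mkF _ hb1 o i hq' ⟨e1, e4⟩
    have h2B : ∀ a1 x2, margB q a1 true false x2 = false := by
      intro a1 x2
      rw [Bool.eq_false_iff]
      intro hT
      simp only [margB, M2, decide_eq_true_eq] at hT
      obtain ⟨o, i, hq', e1, e2, e3, e4⟩ := hT
      exact mkF _ hb2 o i hq' ⟨e2, e3⟩
    have h3B : margB q false false true true = false := by
      rw [Bool.eq_false_iff]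
      intro hT
      simp only [margB, M2, decide_eq_true_eq] at hT
      obtain ⟨o, i, hq', e1, e2, e3, e4⟩ := hT
      exact mkF _ hb3 o i hq' ⟨e1, e2, e3, e4⟩
    have hxB : ∀ y1 y2, ∃ b1 b2, margB q b1 b2 y1 y2 = true := by
      intro y1 y2
      obtain ⟨o, ho⟩ := hin' ⟨false, false, y1, y2, false, false⟩
      exact ⟨o.b1, o.b2, by
        simp only [margB, M2, decide_eq_true_eq]
        exact ⟨o, _, ho, rfl, rfl, rfl, rfl⟩⟩
    intro o i ls hpt hy1 hy2
    refine hco_key (margB q) (margB5 q18) hB h1B h2B h3B hxB o.b1 o.b2 ls.lB ?_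
    simp only [margB5, M3, decide_eq_true_eq]
    exact ⟨o, i, ls, hpt, rfl, rfl, hy1, hy2, rfl⟩
  -- Lemma 1 instantiation for switch C
  have keyC : ∀ o i ls, q18 o i ls = true → i.z1 = true → i.z2 = true →
      o.c1 = ls.lC := by
    have h1C : ∀ a2 x1, margC q true a2 x1 false = false := by
      intro a2 x1
      rw [Bool.eq_false_iff]
      intro hT
      simp only [margC, M2, decide_eq_true_eq] at hT
      obtain ⟨o, i, hq', e1, e2, e3, e4⟩ := hT
      exact mkF _ hc1 o i hq' ⟨e1, e4⟩
    have h2C : ∀ a1 x2, margC q a1 true false x2 = false := by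
      intro a1 x2
      rw [Bool.eq_false_iff]
      intro hT
      simp only [margC, M2, decide_eq_true_eq] at hT
      obtain ⟨o, i, hq', e1, e2, e3, e4⟩ := hT
      exact mkF _ hc2 o i hq' ⟨e2, e3⟩
    have h3C : margC q false false true true = false := by
      rw [Bool.eq_false_iff]
      intro hT
      simp only [margC, M2, decide_eq_true_eq] at hT
      obtain ⟨o, i, hq', e1, e2, e3, e4⟩ := hT
      exact mkF _ hc3 o i hq' ⟨e1, e2, e3, e4⟩
    have hxC : ∀ z1 z2, ∃ c1 c2, margC q c1 c2 z1 z2 = true := by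
      intro z1 z2
      obtain ⟨o, ho⟩ := hin' ⟨false, false, false, false, z1, z2⟩
      exact ⟨o.c1, o.c2, by
        simp only [margC, M2, decide_eq_true_eq]
        exact ⟨o, _, ho, rfl, rfl, rfl, rfl⟩⟩
    intro o i ls hpt hz1 hz2
    refine hco_key (margC q) (margC5 q18) hC h1C h2C h3C hxC o.c1 o.c2 ls.lC ?_
    simp only [margC5, M3, decide_eq_true_eq]
    exact ⟨o, i, ls, hpt, rfl, rfl, hz1, hz2, rfl⟩
  -- any possible λ is possible with every input
  have lamPoss : ∀ (ls : Lams) (iv : Inputs), (∃ o i, q18 o i ls = true) →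
      ∃ o, q18 o iv ls = true := by
    intro ls iv ⟨ow, iw, hw⟩
    have hL : M3 q18 (fun _ _ l => l = ls) = true := by
      rw [M3_true]; exact ⟨ow, iw, ls, hw, rfl⟩
    have hI : M3 q18 (fun _ i _ => i = iv) = true := by
      obtain ⟨o, l, hl⟩ := hin18 iv
      rw [M3_true]; exact ⟨o, iv, l, hl, rfl⟩
    have := hLI ls iv
    rw [hL, hI] at this
    simp only [Bool.and_self] at this
    rw [M3_true] at this
    obtain ⟨o, i, l, hpt, hl, hi⟩ := this
    subst hl; subst hi
    exact ⟨o, hpt⟩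
  -- any inputs are jointly possible (in field form)
  have inPoss : ∀ v1 v2 v3 v4 v5 v6 : Bool,
      M3 q18 (fun _ i _ => i.x1 = v1 ∧ i.x2 = v2 ∧
        i.y1 = v3 ∧ i.y2 = v4 ∧ i.z1 = v5 ∧ i.z2 = v6) = true := by
    intro v1 v2 v3 v4 v5 v6
    obtain ⟨o, l, hl⟩ := hin18 ⟨v1, v2, v3, v4, v5, v6⟩
    rw [M3_true]
    exact ⟨o, _, l, hl, rfl, rfl, rfl, rfl, rfl, rfl⟩
  -- GHZ constraints pointwise
  have g1 : ∀ o ls, q18 o ⟨true, true, true, true, true, true⟩ ls = true →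
      Bool.xor o.a1 (Bool.xor o.b1 o.c1) = false := by
    intro o ls hpt
    rw [Bool.eq_false_iff]
    intro hT
    exact mkF _ hg1 o _ (toq _ _ _ hpt) ⟨hT, rfl⟩
  have g2 : ∀ o ls, q18 o ⟨true, true, false, false, false, false⟩ ls = true →
      Bool.xor o.a1 (Bool.xor o.b3 o.c3) = true := by
    intro o ls hpt
    cases hE : Bool.xor o.a1 (Bool.xor o.b3 o.c3) with
    | true => rfl
    | false => exact absurd (mkF _ hg2 o _ (toq _ _ _ hpt) ⟨hE, rfl⟩) not_false
  have g3 : ∀ o ls, q18 o ⟨false, false, true, true, false, false⟩ ls = true →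
      Bool.xor o.a3 (Bool.xor o.b1 o.c3) = true := by
    intro o ls hpt
    cases hE : Bool.xor o.a3 (Bool.xor o.b1 o.c3) with
    | true => rfl
    | false => exact absurd (mkF _ hg3 o _ (toq _ _ _ hpt) ⟨hE, rfl⟩) not_false
  have g4 : ∀ o ls, q18 o ⟨false, false, false, false, true, true⟩ ls = true →
      Bool.xor o.a3 (Bool.xor o.b3 o.c1) = true := by
    intro o ls hpt
    cases hE : Bool.xor o.a3 (Bool.xor o.b3 o.c1) with
    | true => rfl
    | false => exact absurd (mkF _ hg4 o _ (toq _ _ _ hpt) ⟨hE, rfl⟩) not_false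
  -- p2 : a point at inputs (𝟏,𝟎,𝟎) with hidden variables l0
  obtain ⟨o2, h2⟩ := lamPoss l0 ⟨true, true, false, false, false, false⟩ ⟨o0, i0, h0⟩
  have ea2 : o2.a1 = l0.lA := keyA o2 _ l0 h2 rfl rfl
  have E2' : Bool.xor o2.a1 (Bool.xor o2.b3 o2.c3) = true := g2 o2 l0 h2
  -- transfer (λ_A, b3, c3) from x = 𝟏 to x = 𝟎 at (y,z) = (𝟎,𝟎)
  obtain ⟨o5, i5, ls5, hp5, f1, f2, f3, f4, f5, f6, f7, f8, f9⟩ : ∃ o i ls,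
      q18 o i ls = true ∧ ls.lA = l0.lA ∧ o.b3 = o2.b3 ∧ o.c3 = o2.c3 ∧
      i.x1 = false ∧ i.x2 = false ∧ i.y1 = false ∧ i.y2 = false ∧
      i.z1 = false ∧ i.z2 = false := by
    have := hRA l0.lA o2.b3 o2.c3 false false false false false false
    have hF1 : M3 q18 (fun o i l => l.lA = l0.lA ∧ o.b3 = o2.b3 ∧ o.c3 = o2.c3 ∧
        i.y1 = false ∧ i.y2 = false ∧ i.z1 = false ∧ i.z2 = false) = true := by
      rw [M3_true]
      exact ⟨o2, _, l0, h2, rfl, rfl, rfl, rfl, rfl, rfl, rfl⟩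
    rw [hF1, inPoss false false false false false false] at this
    simp only [Bool.and_self] at this
    rw [M3_true] at this
    obtain ⟨o, i, l, hpt, e1, e2, e3, e4, e5, e6, e7, e8, e9⟩ := this
    exact ⟨o, i, l, hpt, e1, e2, e3, e4, e5, e6, e7, e8, e9⟩
  -- transfer (a3, λ_B, c3) from y = 𝟎 to y = 𝟏 at (x,z) = (𝟎,𝟎)
  obtain ⟨o3, i3, ls3, hp3, g3a, g3b, g3c, g3x1, g3x2, g3y1, g3y2, g3z1, g3z2⟩ :
      ∃ o i ls, q18 o i ls = true ∧ o.a3 = o5.a3 ∧ ls.lB = ls5.lB ∧ o.c3 = o5.c3 ∧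
      i.x1 = false ∧ i.x2 = false ∧ i.y1 = true ∧ i.y2 = true ∧
      i.z1 = false ∧ i.z2 = false := by
    have := hRB o5.a3 ls5.lB o5.c3 false false true true false false
    have hF1 : M3 q18 (fun o i l => o.a3 = o5.a3 ∧ l.lB = ls5.lB ∧ o.c3 = o5.c3 ∧
        i.x1 = false ∧ i.x2 = false ∧ i.z1 = false ∧ i.z2 = false) = true := by
      rw [M3_true]
      exact ⟨o5, i5, ls5, hp5, rfl, rfl, rfl, f4, f5, f8, f9⟩
    rw [hF1, inPoss false false true true false false] at this
    simp only [Bool.and_self] at this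
    rw [M3_true] at this
    obtain ⟨o, i, l, hpt, e1, e2, e3, e4, e5, e6, e7, e8, e9⟩ := this
    exact ⟨o, i, l, hpt, e1, e2, e3, e4, e5, e6, e7, e8, e9⟩
  -- transfer (a3, b3, λ_C) from z = 𝟎 to z = 𝟏 at (x,y) = (𝟎,𝟎)
  obtain ⟨o4, i4, ls4, hp4, g4a, g4b, g4c, g4x1, g4x2, g4y1, g4y2, g4z1, g4z2⟩ :
      ∃ o i ls, q18 o i ls = true ∧ o.a3 = o5.a3 ∧ o.b3 = o5.b3 ∧ ls.lC = ls5.lC ∧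
      i.x1 = false ∧ i.x2 = false ∧ i.y1 = false ∧ i.y2 = false ∧
      i.z1 = true ∧ i.z2 = true := by
    have := hRC o5.a3 o5.b3 ls5.lC false false false false true true
    have hF1 : M3 q18 (fun o i l => o.a3 = o5.a3 ∧ o.b3 = o5.b3 ∧ l.lC = ls5.lC ∧
        i.x1 = false ∧ i.x2 = false ∧ i.y1 = false ∧ i.y2 = false) = true := by
      rw [M3_true]
      exact ⟨o5, i5, ls5, hp5, rfl, rfl, rfl, f4, f5, f6, f7⟩
    rw [hF1, inPoss false false false false true true] at this
    simp only [Bool.and_self] at this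
    rw [M3_true] at this
    obtain ⟨o, i, l, hpt, e1, e2, e3, e4, e5, e6, e7, e8, e9⟩ := this
    exact ⟨o, i, l, hpt, e1, e2, e3, e4, e5, e6, e7, e8, e9⟩
  -- evaluate constraint at I3
  have hi3 : i3 = ⟨false, false, true, true, false, false⟩ := by
    obtain ⟨u1, u2, u3, u4, u5, u6⟩ := i3
    simp only at g3x1 g3x2 g3y1 g3y2 g3z1 g3z2
    subst g3x1; subst g3x2; subst g3y1; subst g3y2; subst g3z1; subst g3z2; rfl
  have eb3 : o3.b1 = ls3.lB := by
    apply keyB o3 i3 ls3 hp3 g3y1 g3y2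
  have E3' : Bool.xor o5.a3 (Bool.xor ls5.lB o5.c3) = true := by
    have := g3 o3 ls3 (hi3 ▸ hp3)
    rwa [g3a, eb3, g3b, g3c] at this
  -- evaluate constraint at I4
  have hi4 : i4 = ⟨false, false, false, false, true, true⟩ := by
    obtain ⟨u1, u2, u3, u4, u5, u6⟩ := i4
    simp only at g4x1 g4x2 g4y1 g4y2 g4z1 g4z2
    subst g4x1; subst g4x2; subst g4y1; subst g4y2; subst g4z1; subst g4z2; rfl
  have ec4 : o4.c1 = ls4.lC := by
    apply keyC o4 i4 ls4 hp4 g4z1 g4z2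
  have E4' : Bool.xor o5.a3 (Bool.xor o5.b3 ls5.lC) = true := by
    have := g4 o4 ls4 (hi4 ▸ hp4)
    rwa [g4a, g4b, ec4, g4c] at this
  -- evaluate constraint at I1 with λ = ls5
  obtain ⟨o1, hp1⟩ := lamPoss ls5 ⟨true, true, true, true, true, true⟩ ⟨o5, i5, hp5⟩
  have ea1 : o1.a1 = ls5.lA := keyA o1 _ ls5 hp1 rfl rfl
  have eb1 : o1.b1 = ls5.lB := keyB o1 _ ls5 hp1 rfl rfl
  have ec1 : o1.c1 = ls5.lC := keyC o1 _ ls5 hp1 rfl rfl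
  have E1' : Bool.xor ls5.lA (Bool.xor ls5.lB ls5.lC) = false := by
    have := g1 o1 ls5 hp1
    rwa [ea1, eb1, ec1] at this
  -- rewrite E2' in terms of ls5.lA
  have E2'' : Bool.xor ls5.lA (Bool.xor o2.b3 o2.c3) = true := by
    rw [f1, ← ea2]; exact E2'
  rw [← f2, ← f3] at E2''
  -- final GHZ contradiction
  have final : ∀ u v w p q' r : Bool,
      Bool.xor u (Bool.xor v w) = false → Bool.xor u (Bool.xor p q') = true →
      Bool.xor r (Bool.xor v q') = true → Bool.xor r (Bool.xor p w) = true → False := by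
    decide
  exact final ls5.lA ls5.lB ls5.lC o5.b3 o5.c3 o5.a3 E1' E2'' E3' E4'
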